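/- arXiv:1905.00313 — 3 statements merged into one kernel-verified Lean document; each statement's English description precedes it below -/
import Mathlib

section
/- If f is convex differentiable, x* a minimizer, and the Polyak step size η_t = h_t/‖∇f(x_t)‖² is used (when ∇f(x_t) ≠ 0), then ‖x_{t+1} - x*‖² ≤ ‖x_t - x*‖² - h_t²/‖∇f(x_t)‖². -/
/-!
Convexity gives the tangent-plane bound `f x + ⟪∇f x, x⋆ - x⟫ ≤ f x⋆`, i.e. the gap
`h = f x - f x⋆` is at most `⟪∇f x, x - x⋆⟫`. Expanding the square of the Polyak step
`x - η ∇f x - x⋆` with `η = h / ‖∇f x‖²`, the cross term `-2η⟪∇f x, x - x⋆⟫` is then at most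
`-2h² / ‖∇f x‖²`, while the quadratic term `η² ‖∇f x‖²` equals `h² / ‖∇f x‖²`.
-/

open RealInnerProductSpace

theorem ConvexOn.add_fderiv_sub_le {E : Type*} [NormedAddCommGroup E] [NormedSpace ℝ E]
    {s : Set E} {f : E → ℝ} {f' : E →L[ℝ] ℝ} {x y : E} (hf : ConvexOn ℝ s f)
    (hx : x ∈ s) (hy : y ∈ s) (hf' : HasFDerivAt f f' x) : f x + f' (y - x) ≤ f y := by
  let A : ℝ →ᵃ[ℝ] E := AffineMap.lineMap x y
  have hA : HasDerivAt (f ∘ A) (f' (y - x)) 0 :=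
    (show HasFDerivAt f f' (A 0) by simpa [A] using hf').comp_hasDerivAt (0 : ℝ)
      (AffineMap.hasDerivAt_lineMap (a := x) (b := y))
  have := (hf.comp_affineMap A).le_slope_of_hasDerivAt (x := 0) (y := 1)
    (by simpa [A] using hx) (by simpa [A] using hy) zero_lt_one hA
  simp only [slope_def_field, Function.comp_apply, A, AffineMap.lineMap_apply_zero,
    AffineMap.lineMap_apply_one, sub_zero, div_one] at this
  linarith

theorem ConvexOn.add_inner_sub_le_of_hasGradientAt {E : Type*} [NormedAddCommGroup E]
    [InnerProductSpace ℝ E] [CompleteSpace E] {s : Set E} {f : E → ℝ} {g x y : E}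
    (hf : ConvexOn ℝ s f) (hx : x ∈ s) (hy : y ∈ s) (hg : HasGradientAt f g x) :
    f x + ⟪g, y - x⟫ ≤ f y := by
  simpa using hf.add_fderiv_sub_le hx hy hg.hasFDerivAt

theorem norm_sub_polyak_step_sq_le {E : Type*} [NormedAddCommGroup E] [InnerProductSpace ℝ E]
    {v d : E} {h : ℝ} (h0 : 0 ≤ h) (hle : h ≤ ⟪v, d⟫) :
    ‖d - (h / ‖v‖ ^ 2) • v‖ ^ 2 ≤ ‖d‖ ^ 2 - h ^ 2 / ‖v‖ ^ 2 := by
  rcases eq_or_ne v 0 with rfl | hv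
  · -- the step is `0 • 0` and `h ^ 2 / 0 = 0`
    simp
  have hv2 : ‖v‖ ^ 2 ≠ 0 := pow_ne_zero 2 (norm_ne_zero_iff.2 hv)
  set η := h / ‖v‖ ^ 2
  have hη : η * ‖v‖ ^ 2 = h := div_mul_cancel₀ h hv2
  have hη0 : 0 ≤ η := by positivity
  calc ‖d - η • v‖ ^ 2 = ‖d‖ ^ 2 - 2 * η * ⟪v, d⟫ + η * (η * ‖v‖ ^ 2) := by
        rw [norm_sub_sq_real, real_inner_smul_right, norm_smul, mul_pow, Real.norm_eq_abs,
          sq_abs, real_inner_comm]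
        ring
    _ ≤ ‖d‖ ^ 2 - 2 * η * h + η * h := by
        rw [hη]; linarith [mul_le_mul_of_nonneg_left hle hη0]
    _ = ‖d‖ ^ 2 - h ^ 2 / ‖v‖ ^ 2 := by ring

theorem stmt_1_general {d : ℕ} (f : EuclideanSpace ℝ (Fin d) → ℝ)
    (g : EuclideanSpace ℝ (Fin d) → EuclideanSpace ℝ (Fin d))
    (hg : ∀ x, HasGradientAt f (g x) x)
    (hconv : ConvexOn ℝ Set.univ f)
    (xstar xt xt1 : EuclideanSpace ℝ (Fin d))
    (hmin : ∀ y, f xstar ≤ f y)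
    (hupd : xt1 = xt - ((f xt - f xstar) / ‖g xt‖ ^ 2) • g xt) :
    ‖xt1 - xstar‖ ^ 2 ≤ ‖xt - xstar‖ ^ 2 - (f xt - f xstar) ^ 2 / ‖g xt‖ ^ 2 := by
  have htangent := hconv.add_inner_sub_le_of_hasGradientAt (Set.mem_univ xt)
    (Set.mem_univ xstar) (hg xt)
  rw [← neg_sub, inner_neg_right] at htangent
  have hstep : xt1 - xstar = (xt - xstar) - ((f xt - f xstar) / ‖g xt‖ ^ 2) • g xt := by
    rw [hupd]; abel
  rw [hstep]
  exact norm_sub_polyak_step_sq_le (sub_nonneg.2 (hmin xt)) (by linarith)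

theorem stmt_1 {d : ℕ} (f : EuclideanSpace ℝ (Fin d) → ℝ)
    (g : EuclideanSpace ℝ (Fin d) → EuclideanSpace ℝ (Fin d))
    (hg : ∀ x, HasGradientAt f (g x) x)
    (hconv : ConvexOn ℝ Set.univ f)
    (xstar xt xt1 : EuclideanSpace ℝ (Fin d))
    (hmin : ∀ y, f xstar ≤ f y)
    (hgrad : g xt ≠ 0)
    (hupd : xt1 = xt - ((f xt - f xstar) / ‖g xt‖ ^ 2) • g xt) :
    ‖xt1 - xstar‖ ^ 2 ≤ ‖xt - xstar‖ ^ 2 - (f xt - f xstar) ^ 2 / ‖g xt‖ ^ 2 :=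
  stmt_1_general f g hg hconv xstar xt xt1 hmin hupd
end

section
/- Let f be convex differentiable with minimizer x*, and let f̃ ≤ f(x*) be a lower bound. With step size η_t = (f(x_t) - f̃)/(2‖∇f(x_t)‖²), if η_t ≤ h_t/‖∇f(x_t)‖² holds at step t, then ‖x_{t+1} - x*‖² ≤ ‖x_t - x*‖² - h_t²/(2‖∇f(x_t)‖²). -/
open RealInnerProductSpace

lemma grad_ineq' {d : ℕ} (f : EuclideanSpace ℝ (Fin d) → ℝ)
    (hconv : ConvexOn ℝ Set.univ f) (x y : EuclideanSpace ℝ (Fin d))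
    (gx : EuclideanSpace ℝ (Fin d)) (hg : HasGradientAt f gx x) :
    f x + ⟪gx, y - x⟫ ≤ f y := by
  set c : ℝ → EuclideanSpace ℝ (Fin d) := fun t => x + t • (y - x) with hc
  have hcd : ∀ t : ℝ, HasDerivAt c (y - x) t := by
    intro t
    have : HasDerivAt (fun t : ℝ => t • (y - x)) (y - x) t := by
      simpa using (hasDerivAt_id t).smul_const (y - x)
    simpa [c] using this.const_add x
  have hc0 : c 0 = x := by simp [c]
  have hderiv : HasDerivAt (f ∘ c) ⟪gx, y - x⟫ 0 := by
    have hf : HasFDerivAt f ((InnerProductSpace.toDual ℝ _) gx) (c 0) := hc0 ▸ hg.hasFDerivAt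
    simpa using hf.comp_hasDerivAt 0 (hcd 0)
  have htend : Filter.Tendsto (slope (f ∘ c) 0) (nhdsWithin 0 {(0:ℝ)}ᶜ)
      (nhds ⟪gx, y - x⟫) := hasDerivAt_iff_tendsto_slope.mp hderiv
  have htend' : Filter.Tendsto (slope (f ∘ c) 0) (nhdsWithin 0 (Set.Ioi 0))
      (nhds ⟪gx, y - x⟫) :=
    htend.mono_left (nhdsWithin_mono _ (fun t ht => ne_of_gt ht))
  have hle : ⟪gx, y - x⟫ ≤ f y - f x := by
    refine le_of_tendsto htend' ?_
    filter_upwards [Ioc_mem_nhdsGT_of_mem (Set.mem_Ico.mpr ⟨le_rfl, one_pos⟩)] with t ht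
    obtain ⟨ht0, ht1⟩ := ht
    have hcomb : f (c t) ≤ (1 - t) * f x + t * f y := by
      have := hconv.2 (Set.mem_univ x) (Set.mem_univ y)
        (by linarith : (0:ℝ) ≤ 1 - t) (le_of_lt ht0) (by ring)
      have hpt : (1 - t) • x + t • y = c t := by
        simp [c, smul_sub, sub_smul]; abel
      rwa [hpt] at this
    have hq : (f (c t) - f x) / t ≤ f y - f x := by
      rw [div_le_iff₀ ht0]; nlinarith
    simpa [slope_def_field, Function.comp, hc0] using hq
  linarith

theorem stmt_12 {d : ℕ} (f : EuclideanSpace ℝ (Fin d) → ℝ)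
    (g : EuclideanSpace ℝ (Fin d) → EuclideanSpace ℝ (Fin d))
    (hg : ∀ x, HasGradientAt f (g x) x)
    (hconv : ConvexOn ℝ Set.univ f)
    (xstar xt xt1 : EuclideanSpace ℝ (Fin d))
    (hmin : ∀ y, f xstar ≤ f y)
    (ftilde : ℝ) (hlb : ftilde ≤ f xstar)
    (hgrad : g xt ≠ 0)
    (η : ℝ) (hηdef : η = (f xt - ftilde) / (2 * ‖g xt‖ ^ 2))
    (hηub : η ≤ (f xt - f xstar) / ‖g xt‖ ^ 2)
    (hupd : xt1 = xt - η • g xt) :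
    ‖xt1 - xstar‖ ^ 2 ≤ ‖xt - xstar‖ ^ 2 - (f xt - f xstar) ^ 2 / (2 * ‖g xt‖ ^ 2) := by
  set G : ℝ := ‖g xt‖ ^ 2 with hG
  have hGpos : 0 < G := by
    have h0 : (0:ℝ) < ‖g xt‖ := norm_pos_iff.mpr hgrad
    rw [hG]; positivity
  set h : ℝ := f xt - f xstar with hh
  have hh0 : 0 ≤ h := by have := hmin xt; linarith
  have hkey : h ≤ ⟪g xt, xt - xstar⟫ := by
    have := grad_ineq' f hconv xt xstar (g xt) (hg xt)
    have hneg : ⟪g xt, xstar - xt⟫ = -⟪g xt, xt - xstar⟫ := by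
      rw [← inner_neg_right]; congr 1; abel
    rw [hneg] at this; linarith
  have hηlb : h / (2 * G) ≤ η := by
    rw [hηdef]
    apply div_le_div_of_nonneg_right (by linarith) (by linarith)
  have hηub' : η ≤ h / G := hηub
  have hexp : ‖xt1 - xstar‖ ^ 2 = ‖xt - xstar‖ ^ 2 - 2 * η * ⟪g xt, xt - xstar⟫ + η ^ 2 * G := by
    have : xt1 - xstar = (xt - xstar) - η • g xt := by rw [hupd]; abel
    rw [this, norm_sub_sq_real, real_inner_smul_right, norm_smul, mul_pow,
      Real.norm_eq_abs, sq_abs, real_inner_comm (xt - xstar), hG]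
    ring
  rw [hexp]
  rw [div_le_iff₀ (by linarith : (0:ℝ) < 2 * G)] at hηlb
  rw [le_div_iff₀ hGpos] at hηub'
  have hη0 : 0 ≤ η := by nlinarith
  have hmain : h ^ 2 / (2 * G) ≤ 2 * η * h - η ^ 2 * G := by
    rw [div_le_iff₀ (by linarith : (0:ℝ) < 2 * G)]
    nlinarith [mul_nonneg (by linarith : (0:ℝ) ≤ 2 * η * G - h)
      (by linarith : (0:ℝ) ≤ h - η * G), mul_nonneg (mul_nonneg hη0 hGpos.le) hh0]
  have h2 : 2 * η * h ≤ 2 * η * ⟪g xt, xt - xstar⟫ :=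
    mul_le_mul_of_nonneg_left hkey (by linarith)
  nlinarith [hmain, h2]
end

section
/- Let f be convex differentiable with minimizer x* and bounded gradients ‖∇f(x_t)‖ ≤ G along Polyak-stepsize iterates x_{t+1} = x_t - (h_t/‖∇f(x_t)‖²)∇f(x_t). Then min_{0 ≤ t < T} (f(x_t) - f(x*)) ≤ G‖x_0 - x*‖/√T. -/
/-!
Write `h_t = f x_t - f x*`. By the first-order condition for convex functions,
`h_t ≤ ⟪∇f x_t, x_t - x*⟫`, so as long as `h_t ≥ 0` the Polyak step decreases
`‖x_t - x*‖²` by at least `h_t² / ‖∇f x_t‖² ≥ h_t² / G²`. Telescoping gives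
`∑_{t<T} h_t² ≤ G² ‖x_0 - x*‖²`, and for the smallest `h_t` (if it is positive) this yields
`T h_t² ≤ G² ‖x_0 - x*‖²`.
-/

open RealInnerProductSpace Finset

theorem ConvexOn.fderiv_sub_le {E : Type*} [NormedAddCommGroup E] [NormedSpace ℝ E]
    {s : Set E} {f : E → ℝ} {f' : E →L[ℝ] ℝ} {x y : E} (hf : ConvexOn ℝ s f) (hx : x ∈ s)
    (hy : y ∈ s) (hf' : HasFDerivAt f f' x) : f' (y - x) ≤ f y - f x := by
  let ℓ : ℝ →ᵃ[ℝ] E := AffineMap.lineMap x y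
  have hφ : ConvexOn ℝ (ℓ ⁻¹' s) (f ∘ ℓ) := hf.comp_affineMap ℓ
  have hφ' : HasDerivAt (f ∘ ℓ) (f' (y - x)) 0 :=
    HasFDerivAt.comp_hasDerivAt (0 : ℝ) (by simpa [ℓ] using hf') AffineMap.hasDerivAt_lineMap
  simpa [slope_def_field, ℓ] using
    hφ.le_slope_of_hasDerivAt (by simpa [ℓ] using hx) (by simpa [ℓ] using hy) zero_lt_one hφ'

theorem ConvexOn.inner_gradient_sub_le {E : Type*} [NormedAddCommGroup E] [InnerProductSpace ℝ E]
    [CompleteSpace E] {s : Set E} {f : E → ℝ} {g x y : E} (hf : ConvexOn ℝ s f) (hx : x ∈ s)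
    (hy : y ∈ s) (hg : HasGradientAt f g x) : ⟪g, y - x⟫ ≤ f y - f x := by
  simpa using hf.fderiv_sub_le hx hy hg.hasFDerivAt

theorem sq_le_mul_sub_norm_sub_smul_sq {E : Type*} [NormedAddCommGroup E] [InnerProductSpace ℝ E]
    {u v : E} {h G : ℝ} (h0 : 0 ≤ h) (hle : h ≤ ⟪v, u⟫) (hvG : ‖v‖ ≤ G) :
    h ^ 2 ≤ G ^ 2 * (‖u‖ ^ 2 - ‖u - (h / ‖v‖ ^ 2) • v‖ ^ 2) := by
  rcases eq_or_ne v 0 with rfl | hv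
  -- the step is `(h / 0) • 0 = 0`, and `h ≤ ⟪0, u⟫` forces `h = 0`
  · obtain rfl : h = 0 := by rw [inner_zero_left] at hle; linarith
    simp
  have hv2 : 0 < ‖v‖ ^ 2 := by positivity
  have hdrop : ‖u‖ ^ 2 - ‖u - (h / ‖v‖ ^ 2) • v‖ ^ 2 = (2 * h * ⟪v, u⟫ - h ^ 2) / ‖v‖ ^ 2 := by
    rw [norm_sub_sq_real, real_inner_smul_right, norm_smul, mul_pow, Real.norm_eq_abs, sq_abs,
      real_inner_comm]
    field_simp
    ring
  have hquot : h ^ 2 / ‖v‖ ^ 2 ≤ (2 * h * ⟪v, u⟫ - h ^ 2) / ‖v‖ ^ 2 := by gcongr; nlinarith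
  rw [hdrop]
  calc h ^ 2 = ‖v‖ ^ 2 * (h ^ 2 / ‖v‖ ^ 2) := by field_simp
    _ ≤ ‖v‖ ^ 2 * ((2 * h * ⟪v, u⟫ - h ^ 2) / ‖v‖ ^ 2) := by gcongr
    _ ≤ G ^ 2 * ((2 * h * ⟪v, u⟫ - h ^ 2) / ‖v‖ ^ 2) := by
      gcongr
      exact (div_nonneg (sq_nonneg h) hv2.le).trans hquot

section PolyakIterates

variable {E : Type*} [NormedAddCommGroup E] [InnerProductSpace ℝ E] [CompleteSpace E]
  {f : E → ℝ} {g : E → E} {xstar : E} {x : ℕ → E} {G : ℝ}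

theorem polyak_sum_sq_le (hg : ∀ x, HasGradientAt f (g x) x) (hconv : ConvexOn ℝ Set.univ f)
    (hupd : ∀ t, x (t + 1) = x t - ((f (x t) - f xstar) / ‖g (x t)‖ ^ 2) • g (x t))
    (hgrad : ∀ t, ‖g (x t)‖ ≤ G) {T : ℕ} (hgap : ∀ t < T, f xstar ≤ f (x t)) :
    ∑ t ∈ range T, (f (x t) - f xstar) ^ 2 ≤ G ^ 2 * ‖x 0 - xstar‖ ^ 2 := by
  have hstep : ∀ t < T, (f (x t) - f xstar) ^ 2
      ≤ G ^ 2 * (‖x t - xstar‖ ^ 2 - ‖x (t + 1) - xstar‖ ^ 2) := by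
    intro t ht
    have hinner : f (x t) - f xstar ≤ ⟪g (x t), x t - xstar⟫ := by
      have := hconv.inner_gradient_sub_le (Set.mem_univ _) (Set.mem_univ xstar) (hg (x t))
      rw [← neg_sub, inner_neg_right] at this
      linarith
    rw [hupd, sub_right_comm]
    exact sq_le_mul_sub_norm_sub_smul_sq (sub_nonneg.2 (hgap t ht)) hinner (hgrad t)
  calc ∑ t ∈ range T, (f (x t) - f xstar) ^ 2
      ≤ ∑ t ∈ range T, G ^ 2 * (‖x t - xstar‖ ^ 2 - ‖x (t + 1) - xstar‖ ^ 2) :=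
        sum_le_sum fun t ht ↦ hstep t (mem_range.1 ht)
    _ = G ^ 2 * (‖x 0 - xstar‖ ^ 2 - ‖x T - xstar‖ ^ 2) := by
        rw [← mul_sum, sum_range_sub' (fun t ↦ ‖x t - xstar‖ ^ 2)]
    _ ≤ G ^ 2 * ‖x 0 - xstar‖ ^ 2 := by
        gcongr
        exact sub_le_self _ (sq_nonneg _)

end PolyakIterates

theorem stmt_18_general {d : ℕ} (f : EuclideanSpace ℝ (Fin d) → ℝ)
    (g : EuclideanSpace ℝ (Fin d) → EuclideanSpace ℝ (Fin d))
    (hg : ∀ x, HasGradientAt f (g x) x)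
    (hconv : ConvexOn ℝ Set.univ f)
    (xstar : EuclideanSpace ℝ (Fin d))
    (x : ℕ → EuclideanSpace ℝ (Fin d))
    (hupd : ∀ t, x (t + 1) = x t - ((f (x t) - f xstar) / ‖g (x t)‖ ^ 2) • g (x t))
    (G : ℝ) (hgrad : ∀ t, ‖g (x t)‖ ≤ G)
    (T : ℕ) (hT : 1 ≤ T) :
    ∃ t < T, f (x t) - f xstar ≤ G * ‖x 0 - xstar‖ / Real.sqrt T := by
  have hG : 0 ≤ G := (norm_nonneg _).trans (hgrad 0)
  have hTpos : (0 : ℝ) < T := by exact_mod_cast hT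
  obtain ⟨t, ht, hmin⟩ := exists_min_image (range T) (fun t ↦ f (x t) - f xstar)
    ⟨0, mem_range.2 hT⟩
  refine ⟨t, mem_range.1 ht, ?_⟩
  rcases le_or_gt (f (x t) - f xstar) 0 with hle | hpos
  · exact hle.trans (by positivity)
  have hsum := polyak_sum_sq_le hg hconv hupd hgrad fun s hs ↦
    sub_nonneg.1 (hpos.le.trans (hmin s (mem_range.2 hs)))
  have hT_mul : T * (f (x t) - f xstar) ^ 2 ≤ ∑ s ∈ range T, (f (x s) - f xstar) ^ 2 := by
    simpa using card_nsmul_le_sum (range T) _ _ fun s hs ↦ pow_le_pow_left₀ hpos.le (hmin s hs) 2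
  rw [le_div_iff₀ (Real.sqrt_pos.2 hTpos), ← pow_le_pow_iff_left₀ (by positivity) (by positivity)
    two_ne_zero, mul_pow, Real.sq_sqrt hTpos.le, mul_pow]
  linarith

theorem stmt_18 {d : ℕ} (f : EuclideanSpace ℝ (Fin d) → ℝ)
    (g : EuclideanSpace ℝ (Fin d) → EuclideanSpace ℝ (Fin d))
    (hg : ∀ x, HasGradientAt f (g x) x)
    (hconv : ConvexOn ℝ Set.univ f)
    (xstar : EuclideanSpace ℝ (Fin d))
    (hmin : ∀ y, f xstar ≤ f y)
    (x : ℕ → EuclideanSpace ℝ (Fin d))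
    (hupd : ∀ t, x (t + 1) = x t - ((f (x t) - f xstar) / ‖g (x t)‖ ^ 2) • g (x t))
    (G : ℝ) (hG : 0 < G) (hgrad : ∀ t, ‖g (x t)‖ ≤ G)
    (T : ℕ) (hT : 1 ≤ T) :
    ∃ t < T, f (x t) - f xstar ≤ G * ‖x 0 - xstar‖ / Real.sqrt T :=
  stmt_18_general f g hg hconv xstar x hupd G hgrad T hT
end
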